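/- arXiv:2307.07308 — 3 statements merged into one kernel-verified Lean document; each statement's English description precedes it below -/
import Mathlib

section
/- Let G be the graph obtained from the complete bipartite graph K_{d,d} by removing a perfect matching and adding two new vertices u, v, where u is joined to all d vertices of the first part and v is joined to all d vertices of the second part. Then G is d-regular on 2d+2 vertices, and its adjacency spectrum is ±d (each once) and ±1 (each with multiplicity d); consequently its algebraic connectivity is d − 1. -/
open Matrix BigOperators

/-- The algebraic connectivity of a finite simple graph: the second-smallest eigenvalue of
its Laplacian, characterized as the infimum of Rayleigh quotients of the Laplacian over
nonzero vectors orthogonal to the all-ones vector. -/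
noncomputable def algebraicConnectivity {V : Type*} [Fintype V] [DecidableEq V]
    (G : SimpleGraph V) : ℝ :=
  letI := Classical.decRel G.Adj
  sInf {r : ℝ | ∃ x : V → ℝ, x ≠ 0 ∧ (∑ v, x v) = 0 ∧
    r = (x ⬝ᵥ (G.lapMatrix ℝ).mulVec x) / (x ⬝ᵥ x)}


open Polynomial

/-- `K_{d,d}` minus a perfect matching, plus two apex vertices: the first apex `.inr 0` is
joined to all vertices of the first part and the second apex `.inr 1` to all of the second. -/
def modifiedBipartite (d : ℕ) : SimpleGraph ((Fin d ⊕ Fin d) ⊕ Fin 2) :=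
  SimpleGraph.fromRel fun x y =>
    match x, y with
    | .inl (.inl i), .inl (.inr j) => (i : ℕ) ≠ (j : ℕ)
    | .inl (.inl _), .inr u => u = 0
    | .inl (.inr _), .inr u => u = 1
    | _, _ => False

/-- The adjacency matrix of the modified bipartite graph. -/
noncomputable def modifiedBipartiteAdj (d : ℕ) :
    Matrix ((Fin d ⊕ Fin d) ⊕ Fin 2) ((Fin d ⊕ Fin d) ⊕ Fin 2) ℝ :=
  letI := Classical.decRel (modifiedBipartite d).Adj
  (modifiedBipartite d).adjMatrix ℝ

/-! Relabelling the apex joined to the first part as an extra vertex of the second part, and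
vice versa, identifies the graph with the bipartite double cover of `K_{d+1}`. Its adjacency
matrix is `[[0, B], [B, 0]]` with `B = J - I`, which is similar to `[[-B, B], [0, B]]`, so the
spectrum `{d, (-1)^d}` of `B` gives the characteristic polynomial. Writing `x = (y, z)`, the
adjacency form is `2((∑ y)(∑ z) - y ⬝ z)`; when `∑ y + ∑ z = 0` this equals
`-2 (∑ y)² - 2 y ⬝ z ≤ |y|² + |z|²`, with equality at `y = -z = eₐ - e_b`, so the Laplacian
form of the `d`-regular graph is at least `(d - 1) |x|²` and the bound is attained. -/

namespace Matrix

variable {n R : Type*} [Fintype n] [CommRing R]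

theorem dotProduct_fromBlocks_zero_self_self_zero_mulVec {B : Matrix n n R} (hB : B.IsSymm)
    (x : n ⊕ n → R) :
    x ⬝ᵥ (fromBlocks 0 B B 0 *ᵥ x) = 2 * ((x ∘ .inl) ⬝ᵥ (B *ᵥ (x ∘ .inr))) := by
  rw [fromBlocks_mulVec, dotProduct, Fintype.sum_sum_type]
  simp only [zero_mulVec, zero_add, add_zero, Sum.elim_inl, Sum.elim_inr]
  change (x ∘ .inl) ⬝ᵥ _ + (x ∘ .inr) ⬝ᵥ _ = _
  rw [dotProduct_mulVec (x ∘ .inr), ← mulVec_transpose, hB.eq, dotProduct_comm (B *ᵥ _)]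
  ring

variable [DecidableEq n]

theorem charpoly_fromBlocks_zero_self_self_zero (B : Matrix n n R) :
    (fromBlocks 0 B B 0).charpoly = (-B).charpoly * B.charpoly := by
  -- conjugating by `fromBlocks 1 0 1 1` makes the matrix block upper triangular
  let L : Matrix (n ⊕ n) (n ⊕ n) R := fromBlocks 1 0 1 1
  let L' : Matrix (n ⊕ n) (n ⊕ n) R := fromBlocks 1 0 (-1) 1
  have hLL' : L * L' = 1 := by simp [L, L', fromBlocks_multiply, fromBlocks_one]
  have hconj : fromBlocks 0 B B 0 = L' * fromBlocks (-B) B 0 B * L := by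
    simp [L, L', fromBlocks_multiply]
  rw [hconj, mul_assoc, charpoly_mul_comm, mul_assoc, hLL', mul_one,
    charpoly_fromBlocks_zero₂₁]

theorem charpoly_vecMulVec_sub_scalar [Nonempty n] (u v : n → R) (μ : R) :
    (vecMulVec u v - scalar n μ).charpoly =
      (X + C μ - C (u ⬝ᵥ v)) * (X + C μ) ^ (Fintype.card n - 1) := by
  obtain ⟨k, hk⟩ := Nat.exists_eq_add_of_lt (Fintype.card_pos (α := n))
  rw [charpoly_sub_scalar, charpoly_vecMulVec, hk]
  simp only [zero_add, pow_succ, add_tsub_cancel_right, smul_eq_C_mul, sub_comp, mul_comp,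
    pow_comp, X_comp, C_comp]
  ring

end Matrix

theorem two_mul_sum_mul_sum_sub_dotProduct_le {α : Type*} [Fintype α] {y z : α → ℝ}
    (h : ∑ a, y a + ∑ a, z a = 0) :
    2 * ((∑ a, y a) * (∑ a, z a) - y ⬝ᵥ z) ≤ y ⬝ᵥ y + z ⬝ᵥ z := by
  have hyz : 0 ≤ (y + z) ⬝ᵥ (y + z) := by simpa using dotProduct_self_star_nonneg (y + z)
  rw [add_dotProduct, dotProduct_add, dotProduct_add, dotProduct_comm z y] at hyz
  rw [show ∑ a, z a = -∑ a, y a by linarith]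
  nlinarith [sq_nonneg (∑ a, y a)]

namespace SimpleGraph

variable {V W : Type*}

lemma ncard_neighborSet_eq_degree [Fintype V] (G : SimpleGraph V) [DecidableRel G.Adj] (v : V) :
    (G.neighborSet v).ncard = G.degree v := by
  rw [← Nat.card_coe_set_eq, Nat.card_eq_fintype_card, card_neighborSet_eq_degree]

lemma IsRegularOfDegree.lapMatrix_eq [Fintype V] [DecidableEq V] {G : SimpleGraph V}
    [DecidableRel G.Adj] {k : ℕ} (h : G.IsRegularOfDegree k) (R : Type*) [Ring R] :
    G.lapMatrix R = (k : R) • 1 - G.adjMatrix R := by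
  rw [lapMatrix, degMatrix, smul_one_eq_diagonal]
  simp [h.degree_eq]

section BipartiteDoubleCover

variable (G : SimpleGraph V)

lemma neighborSet_bipartiteDoubleCover_inl (v : V) :
    G.bipartiteDoubleCover.neighborSet (.inl v) = .inr '' G.neighborSet v := by
  ext (w | w) <;> simp

lemma neighborSet_bipartiteDoubleCover_inr (v : V) :
    G.bipartiteDoubleCover.neighborSet (.inr v) = .inl '' G.neighborSet v := by
  ext (w | w) <;> simp

lemma IsRegularOfDegree.bipartiteDoubleCover [Fintype V] [DecidableRel G.Adj] {k : ℕ}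
    (h : G.IsRegularOfDegree k) : G.bipartiteDoubleCover.IsRegularOfDegree k := by
  rintro (v | v)
  · rw [← ncard_neighborSet_eq_degree, neighborSet_bipartiteDoubleCover_inl,
      Set.ncard_image_of_injective _ Sum.inr_injective, ncard_neighborSet_eq_degree, h.degree_eq]
  · rw [← ncard_neighborSet_eq_degree, neighborSet_bipartiteDoubleCover_inr,
      Set.ncard_image_of_injective _ Sum.inl_injective, ncard_neighborSet_eq_degree, h.degree_eq]

lemma adjMatrix_bipartiteDoubleCover (R : Type*) [Zero R] [One R] [DecidableRel G.Adj] :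
    G.bipartiteDoubleCover.adjMatrix R = fromBlocks 0 (G.adjMatrix R) (G.adjMatrix R) 0 := by
  ext (v | v) (w | w) <;> rw [adjMatrix_apply] <;> simp

end BipartiteDoubleCover

theorem algebraicConnectivity_eq_of_forall_le [Fintype V] [DecidableEq V] {G : SimpleGraph V}
    [DecidableRel G.Adj] {c : ℝ}
    (hle : ∀ x : V → ℝ, ∑ v, x v = 0 → c * (x ⬝ᵥ x) ≤ x ⬝ᵥ (G.lapMatrix ℝ *ᵥ x))
    (heq : ∃ x : V → ℝ, x ≠ 0 ∧ ∑ v, x v = 0 ∧ x ⬝ᵥ (G.lapMatrix ℝ *ᵥ x) = c * (x ⬝ᵥ x)) :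
    algebraicConnectivity G = c := by
  have hpos : ∀ x : V → ℝ, x ≠ 0 → 0 < x ⬝ᵥ x := fun x hx => by
    simpa using dotProduct_self_star_pos_iff.mpr hx
  obtain rfl : ‹DecidableRel G.Adj› = Classical.decRel G.Adj := Subsingleton.elim _ _
  unfold algebraicConnectivity
  convert IsLeast.csInf_eq ⟨?_, ?_⟩
  · obtain ⟨x, hx, hsum, hq⟩ := heq
    exact ⟨x, hx, hsum, by rw [hq, mul_div_cancel_right₀ _ (hpos x hx).ne']⟩
  · rintro r ⟨x, hx, hsum, rfl⟩
    rw [le_div_iff₀ (hpos x hx)]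
    exact hle x hsum

namespace Iso

variable {G : SimpleGraph V} {H : SimpleGraph W}

lemma ncard_neighborSet (φ : G ≃g H) (v : V) :
    (H.neighborSet (φ v)).ncard = (G.neighborSet v).ncard := by
  have : G.neighborSet v = φ ⁻¹' H.neighborSet (φ v) := by ext; simp [φ.map_adj_iff]
  rw [this, Set.ncard_preimage_of_injective_subset_range φ.injective (by simp)]

variable [Fintype V] [Fintype W] [DecidableEq V] [DecidableEq W]

lemma charpoly_adjMatrix (φ : G ≃g H) [DecidableRel G.Adj] [DecidableRel H.Adj]
    (R : Type*) [CommRing R] :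
    (G.adjMatrix R).charpoly = (H.adjMatrix R).charpoly := by
  have : G.adjMatrix R = reindex φ.toEquiv.symm φ.toEquiv.symm (H.adjMatrix R) := by
    ext v w; simp [φ.map_adj_iff]
  rw [this, charpoly_reindex]

lemma dotProduct_lapMatrix_mulVec (φ : G ≃g H) [DecidableRel G.Adj] [DecidableRel H.Adj]
    (x : W → ℝ) :
    (x ∘ φ) ⬝ᵥ (G.lapMatrix ℝ *ᵥ (x ∘ φ)) = x ⬝ᵥ (H.lapMatrix ℝ *ᵥ x) := by
  simp only [← toLinearMap₂'_apply', lapMatrix_toLinearMap₂']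
  rw [← φ.toEquiv.sum_comp]
  simp only [← φ.toEquiv.sum_comp (fun j => if H.Adj _ j then _ else _)]
  simp [φ.map_adj_iff]

theorem algebraicConnectivity_eq (φ : G ≃g H) :
    algebraicConnectivity G = algebraicConnectivity H := by
  classical
  have hq := φ.dotProduct_lapMatrix_mulVec
  have hdot : ∀ x : W → ℝ, (x ∘ φ) ⬝ᵥ (x ∘ φ) = x ⬝ᵥ x := fun x =>
    φ.toEquiv.sum_comp fun w => x w * x w
  have hsum : ∀ x : W → ℝ, ∑ v, (x ∘ φ) v = ∑ w, x w := fun x => φ.toEquiv.sum_comp x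
  unfold algebraicConnectivity
  congr 1
  ext r
  constructor
  · rintro ⟨x, hx, hx0, rfl⟩
    obtain ⟨y, rfl⟩ : ∃ y : W → ℝ, x = y ∘ φ := ⟨x ∘ φ.symm, by ext; simp⟩
    refine ⟨y, fun hy => hx (by simp [hy]), by rwa [← hsum], ?_⟩
    rw [hdot]
    convert congrArg (· / y ⬝ᵥ y) (hq y)
  · rintro ⟨y, hy, hy0, rfl⟩
    refine ⟨y ∘ φ, fun h => hy (funext fun w => by simpa using congrFun h (φ.symm w)),
      by rwa [hsum], ?_⟩
    rw [hdot]
    convert congrArg (· / y ⬝ᵥ y) (hq y).symm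

end Iso

section CompleteGraph

variable {α : Type*} [Fintype α] [DecidableEq α]

lemma dotProduct_adjMatrix_top_mulVec {R : Type*} [CommRing R] (y z : α → R) :
    y ⬝ᵥ ((⊤ : SimpleGraph α).adjMatrix R *ᵥ z) = (∑ a, y a) * (∑ a, z a) - y ⬝ᵥ z := by
  rw [adjMatrix_completeGraph_eq_of_one_sub_one, sub_mulVec, one_mulVec, dotProduct_sub]
  simp [mulVec, dotProduct, Finset.sum_mul]

theorem charpoly_adjMatrix_bipartiteDoubleCover_top [Nonempty α] (R : Type*) [CommRing R] :
    ((⊤ : SimpleGraph α).bipartiteDoubleCover.adjMatrix R).charpoly =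
      (X + C ((Fintype.card α : R) - 1)) * (X - 1) ^ (Fintype.card α - 1) *
        ((X - C ((Fintype.card α : R) - 1)) * (X + 1) ^ (Fintype.card α - 1)) := by
  have hJ : (⊤ : SimpleGraph α).adjMatrix R = vecMulVec 1 1 - scalar α 1 := by
    ext a b; by_cases h : a = b <;> simp [h, vecMulVec]
  have hJneg : -(⊤ : SimpleGraph α).adjMatrix R = vecMulVec (-1) 1 - scalar α (-1) := by
    rw [hJ]; ext a b; by_cases h : a = b <;> simp [h, vecMulVec]
  rw [adjMatrix_bipartiteDoubleCover, charpoly_fromBlocks_zero_self_self_zero, hJneg, hJ,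
    charpoly_vecMulVec_sub_scalar, charpoly_vecMulVec_sub_scalar]
  simp only [map_neg, map_one, neg_dotProduct, one_dotProduct_one, map_natCast, sub_neg_eq_add,
    map_sub]
  ring

theorem algebraicConnectivity_bipartiteDoubleCover_top [Nontrivial α] :
    algebraicConnectivity (⊤ : SimpleGraph α).bipartiteDoubleCover = Fintype.card α - 2 := by
  have hcard : 1 ≤ Fintype.card α := Fintype.card_pos
  have hlap : ∀ x : α ⊕ α → ℝ,
      x ⬝ᵥ ((⊤ : SimpleGraph α).bipartiteDoubleCover.lapMatrix ℝ *ᵥ x) =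
        (Fintype.card α - 1) * (x ⬝ᵥ x) - 2 * ((∑ a, (x ∘ .inl) a) * (∑ a, (x ∘ .inr) a) -
          (x ∘ .inl) ⬝ᵥ (x ∘ .inr)) := by
    intro x
    rw [IsRegularOfDegree.top.bipartiteDoubleCover.lapMatrix_eq, sub_mulVec, dotProduct_sub,
      smul_mulVec, one_mulVec, dotProduct_smul, adjMatrix_bipartiteDoubleCover,
      dotProduct_fromBlocks_zero_self_self_zero_mulVec (isSymm_adjMatrix _),
      dotProduct_adjMatrix_top_mulVec, Nat.cast_sub hcard, Nat.cast_one, smul_eq_mul]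
  have hdot : ∀ x : α ⊕ α → ℝ, x ⬝ᵥ x = (x ∘ .inl) ⬝ᵥ (x ∘ .inl) + (x ∘ .inr) ⬝ᵥ (x ∘ .inr) :=
    fun x => Fintype.sum_sum_type _
  apply algebraicConnectivity_eq_of_forall_le
  · intro x hx
    rw [Fintype.sum_sum_type] at hx
    rw [hlap, hdot]
    linarith [two_mul_sum_mul_sum_sub_dotProduct_le (y := x ∘ .inl) (z := x ∘ .inr) hx]
  · obtain ⟨a, b, hab⟩ := exists_pair_ne α
    set y : α → ℝ := Pi.single a 1 - Pi.single b 1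
    have hy : ∑ a, y a = 0 := by simp [y]
    refine ⟨Sum.elim y (-y), fun h => ?_, ?_, ?_⟩
    · simpa [y, hab] using congrFun h (.inl a)
    · simp [Fintype.sum_sum_type, hy]
    · rw [hlap, hdot]
      simp only [Sum.elim_comp_inl, Sum.elim_comp_inr, hy, Pi.neg_apply, Finset.sum_neg_distrib,
        neg_dotProduct, dotProduct_neg]
      ring

end CompleteGraph

end SimpleGraph

def modifiedBipartiteIsoBipartiteDoubleCoverTop (d : ℕ) :
    modifiedBipartite d ≃g (⊤ : SimpleGraph (Option (Fin d))).bipartiteDoubleCover where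
  toFun
    | .inl (.inl i) => .inl (some i)
    | .inl (.inr j) => .inr (some j)
    | .inr u => if u = 0 then .inr none else .inl none
  invFun
    | .inl (some i) => .inl (.inl i)
    | .inr (some j) => .inl (.inr j)
    | .inr none => .inr 0
    | .inl none => .inr 1
  left_inv := by
    rintro ((i | j) | u)
    · rfl
    · rfl
    · fin_cases u <;> rfl
  right_inv := by rintro ((_ | i) | (_ | j)) <;> rfl
  map_rel_iff' := by
    rintro ((i | j) | u) ((i' | j') | u') <;> (try fin_cases u) <;> (try fin_cases u') <;>
      simp [modifiedBipartite, Fin.val_inj, eq_comm]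

theorem modifiedBipartite_spectrum (d : ℕ) (hd : 2 ≤ d) :
    (∀ v, {w | (modifiedBipartite d).Adj v w}.ncard = d) ∧
    Nat.card ((Fin d ⊕ Fin d) ⊕ Fin 2) = 2 * d + 2 ∧
    (modifiedBipartiteAdj d).charpoly =
      (X - C (d : ℝ)) * (X + C (d : ℝ)) * (X - 1) ^ d * (X + 1) ^ d ∧
    algebraicConnectivity (modifiedBipartite d) = d - 1 := by
  classical
  let φ := modifiedBipartiteIsoBipartiteDoubleCoverTop d
  have hcard : Fintype.card (Option (Fin d)) = d + 1 := by simp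
  refine ⟨fun v => ?_, by simp; ring, ?_, ?_⟩
  · change (SimpleGraph.neighborSet _ v).ncard = d
    rw [← φ.ncard_neighborSet, SimpleGraph.ncard_neighborSet_eq_degree,
      SimpleGraph.IsRegularOfDegree.top.bipartiteDoubleCover.degree_eq, hcard, Nat.add_sub_cancel]
  · rw [modifiedBipartiteAdj, φ.charpoly_adjMatrix,
      SimpleGraph.charpoly_adjMatrix_bipartiteDoubleCover_top, hcard, Nat.cast_add_one,
      add_sub_cancel_right, Nat.add_sub_cancel]
    ring
  · have : NeZero d := ⟨by omega⟩
    rw [φ.algebraicConnectivity_eq, SimpleGraph.algebraicConnectivity_bipartiteDoubleCover_top,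
      hcard, Nat.cast_add_one]
    ring
end

section
/- Let d ≥ 3 and K ≥ 2, and let θ ∈ (0, π) be the smallest positive root of tan(θK) = −(d/(d−2))·tan(θ). Then π/(2K) < θ < π/K. -/
/-! For `0 < t ≤ π / (2K)` both `tan t` and `tan (tK)` are nonnegative (Mathlib's `tan (π / 2)`
is `0`), while `-c tan t` is negative, so there is no root there. On `[π / (2K), π / K]` the
cleared-denominator form `sin (tK) cos t + c cos (tK) sin t` of the equation is continuous and
changes sign from `cos (π / (2K)) > 0` to `-c sin (π / K) < 0`, so it has a root strictly inside,
and the smallest root lies below it. -/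

open Real Set

namespace Real

theorem tan_eq_neg_mul_tan_iff {a b c : ℝ} (ha : cos a ≠ 0) (hb : cos b ≠ 0) :
    tan a = -c * tan b ↔ sin a * cos b + c * cos a * sin b = 0 := by
  rw [tan_eq_sin_div_cos, tan_eq_sin_div_cos]
  constructor <;> intro h
  · field_simp at h
    linarith
  · field_simp
    linarith

theorem pi_div_two_mul_lt_of_tan_mul_eq_neg_mul_tan {c k t : ℝ} (hc : 0 < c) (hk : 1 < k)
    (ht : 0 < t) (heq : tan (t * k) = -c * tan t) : π / (2 * k) < t := by
  by_contra! hle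
  have hk₀ : 0 < k := by linarith
  have htk : t * k ≤ π / 2 := by
    calc t * k ≤ π / (2 * k) * k := by gcongr
      _ = π / 2 := by field_simp
  have ht_lt : t < π / 2 := by
    calc t < t * k := lt_mul_of_one_lt_right ht hk
      _ ≤ π / 2 := htk
  have htan_pos : 0 < tan t := tan_pos_of_pos_of_lt_pi_div_two ht ht_lt
  have htan_mul_nonneg : 0 ≤ tan (t * k) :=
    tan_nonneg_of_nonneg_of_le_pi_div_two (by positivity) htk
  linarith [mul_pos hc htan_pos]

theorem exists_tan_mul_eq_neg_mul_tan {c k : ℝ} (hc : 0 < c) (hk : 2 ≤ k) :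
    ∃ t ∈ Ioo (π / (2 * k)) (π / k), tan (t * k) = -c * tan t := by
  have hk₀ : 0 < k := by linarith
  set g : ℝ → ℝ := fun t ↦ sin (t * k) * cos t + c * cos (t * k) * sin t
  have hpk : π / (2 * k) * k = π / 2 := by field_simp
  have hqk : π / k * k = π := by field_simp
  have hpq : π / (2 * k) < π / k := div_lt_div_of_pos_left pi_pos hk₀ (by linarith)
  have hq_le : π / k ≤ π / 2 := div_le_div_of_nonneg_left pi_pos.le two_pos hk
  have hp_pos : 0 < π / (2 * k) := by positivity
  have hgp : 0 < g (π / (2 * k)) := by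
    simp only [g, hpk, sin_pi_div_two, cos_pi_div_two]
    linarith [cos_pos_of_mem_Ioo (x := π / (2 * k)) ⟨by linarith [pi_pos], by linarith⟩]
  have hgq : g (π / k) < 0 := by
    simp only [g, hqk, sin_pi, cos_pi]
    nlinarith [sin_pos_of_pos_of_lt_pi (x := π / k) (by linarith) (by linarith [pi_pos])]
  have hg_cont : Continuous g := by fun_prop
  obtain ⟨t, ht, hgt⟩ :=
    intermediate_value_Ioo' hpq.le hg_cont.continuousOn ⟨hgq, hgp⟩
  refine ⟨t, ht, (tan_eq_neg_mul_tan_iff ?_ ?_).2 hgt⟩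
  · refine (cos_neg_of_pi_div_two_lt_of_lt ?_ ?_).ne
    · calc π / 2 = π / (2 * k) * k := hpk.symm
        _ < t * k := by gcongr; exact ht.1
    · calc t * k < π / k * k := by gcongr; exact ht.2
        _ < π + π / 2 := by linarith [pi_pos]
  · exact (cos_pos_of_mem_Ioo ⟨by linarith [pi_pos, ht.1], by linarith [ht.2]⟩).ne'

end Real

theorem even_diameter_theta_bounds (d K : ℕ) (hd : 3 ≤ d) (hK : 2 ≤ K) (θ : ℝ)
    (hθ : θ ∈ Set.Ioo 0 π)
    (hroot : Real.tan (θ * K) = -((d : ℝ) / ((d : ℝ) - 2)) * Real.tan θ)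
    (hmin : ∀ θ' : ℝ, 0 < θ' →
      Real.tan (θ' * K) = -((d : ℝ) / ((d : ℝ) - 2)) * Real.tan θ' → θ ≤ θ') :
    π / (2 * K) < θ ∧ θ < π / K := by
  have hK' : (2 : ℝ) ≤ K := by exact_mod_cast hK
  have hc : 0 < (d : ℝ) / ((d : ℝ) - 2) := by
    have : (3 : ℝ) ≤ d := by exact_mod_cast hd
    exact div_pos (by linarith) (by linarith)
  obtain ⟨t, ht, ht_root⟩ := exists_tan_mul_eq_neg_mul_tan hc hK'
  refine ⟨pi_div_two_mul_lt_of_tan_mul_eq_neg_mul_tan hc (by linarith) hθ.1 hroot, ?_⟩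
  exact (hmin t ((div_pos pi_pos (by positivity)).trans ht.1) ht_root).trans_lt ht.2
end

section
/- Let T be a finite graph in which every vertex has degree at most d and every vertex is at distance at most K−1 from a fixed root r, and suppose all levels are nonempty. Assign to each vertex at distance j from r the value v_{j+1}, where v is a positive decreasing sequence satisfying λv_1 = d(v_1 − v_2), λv_j = dv_j − v_{j−1} − (d−1)v_{j+1} (2 ≤ j ≤ K−1), λv_K = dv_K − v_{K−1} with λ = d − 2√(d−1)cos θ. Then the Rayleigh quotient R = (∑_{j=1}^{K−1} e_j(v_j − v_{j+1})² + e_K v_K²) / (∑_{j=1}^K n_j v_j²) satisfies R ≤ λ, where n_j is the number of vertices at distance j−1 from r, e_j the number of edges between levels j and j+1, and e_K = d·n_K − e_{K−1}. -/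
open Finset

/-!
Write `w t` for the value on level `t`, `n t` for the size of level `t` and `e t` for the number
of edges from level `t` to level `t + 1`. Splitting `(w t - w (t+1))²` as
`w t (w t - w (t+1)) - w (t+1) (w t - w (t+1))` and using that `w` is nonnegative and decreasing,
each `e t` may be replaced by an upper bound in the first product and by a lower bound in the
second. The degree bound gives `e t ≤ (d - 1) n t` for `t ≥ 1` (every vertex of level `t` also
has an edge down) and `e 0 ≤ d n 0`, and every vertex of level `t + 1` has a neighbour in
level `t`, so `n (t + 1) ≤ e t`. After these substitutions the numerator collects into
`∑ n t w t (L w) t`, where `L` is the Bethe-tree recurrence operator, and `L w = λ w`.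
-/

namespace SimpleGraph

variable {V : Type*} (G : SimpleGraph V)

theorem exists_adj_dist_eq_of_dist_eq_succ {r u : V} {t : ℕ} (hu : G.dist r u = t + 1) :
    ∃ a, G.Adj a u ∧ G.dist r a = t := by
  obtain ⟨p, hp⟩ := G.exists_walk_of_dist_ne_zero (by omega : G.dist r u ≠ 0)
  have hadj : G.Adj (p.getVert t) u := by
    have := p.adj_getVert_succ (i := t) (by omega)
    rwa [show t + 1 = p.length by omega, p.getVert_length] at this
  have hle : G.dist r (p.getVert t) ≤ t := by
    simpa [hp, hu] using G.dist_le (p.take t)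
  refine ⟨p.getVert t, hadj, ?_⟩
  have := hadj.diff_dist_adj (u := r)
  omega

variable [Fintype V] (r : V)

noncomputable def levelCard (t : ℕ) : ℕ := #{u | G.dist r u = t}

theorem levelCard_zero_pos : 0 < G.levelCard r 0 :=
  card_pos.2 ⟨r, by simp⟩

variable [DecidableRel G.Adj]

noncomputable def levelEdgeCard (t : ℕ) : ℕ :=
  #{p : V × V | G.Adj p.1 p.2 ∧ G.dist r p.1 = t ∧ G.dist r p.2 = t + 1}

variable {G} {d : ℕ}

theorem card_adj_fst_level_le (hdeg : ∀ u, G.degree u ≤ d) (t : ℕ) :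
    #{p : V × V | G.Adj p.1 p.2 ∧ G.dist r p.1 = t} ≤ d * G.levelCard r t := by
  classical
  refine card_le_mul_card_image_of_maps_to (f := Prod.fst) (fun p hp => ?_) d fun a _ => ?_
  · simp only [mem_filter, mem_univ, true_and] at hp ⊢
    exact hp.2
  · calc #{p ∈ {p : V × V | G.Adj p.1 p.2 ∧ G.dist r p.1 = t} | p.1 = a}
        ≤ #(G.neighborFinset a) := by
          refine card_le_card_of_injOn Prod.snd (fun p hp => ?_) fun p hp q hq hpq => ?_
          · simp only [coe_filter, mem_filter, mem_univ, true_and, Set.mem_ofPred_eq] at hp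
            simpa [← hp.2] using hp.1.1
          · simp only [coe_filter, mem_filter, mem_univ, true_and, Set.mem_ofPred_eq] at hp hq
            exact Prod.ext (hp.2.trans hq.2.symm) hpq
      _ = G.degree a := G.card_neighborFinset_eq_degree a
      _ ≤ d := hdeg a

theorem levelEdgeCard_le (hdeg : ∀ u, G.degree u ≤ d) (t : ℕ) :
    G.levelEdgeCard r t ≤ d * G.levelCard r t := by
  refine (card_le_card fun p hp => ?_).trans (card_adj_fst_level_le r hdeg t)
  simp only [mem_filter, mem_univ, true_and] at hp ⊢
  exact ⟨hp.1, hp.2.1⟩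

/-- A vertex of level `t + 1` sees the edges going up and, reversed, the edges coming from
level `t` among its at most `d` neighbours. -/
theorem levelEdgeCard_succ_add_le (hdeg : ∀ u, G.degree u ≤ d) (t : ℕ) :
    G.levelEdgeCard r (t + 1) + G.levelEdgeCard r t ≤ d * G.levelCard r (t + 1) := by
  classical
  have hswap : G.levelEdgeCard r t =
      #((univ.filter fun p : V × V =>
        G.Adj p.1 p.2 ∧ G.dist r p.1 = t ∧ G.dist r p.2 = t + 1).image Prod.swap) :=
    (card_image_of_injective _ Prod.swap_injective).symm
  rw [hswap, levelEdgeCard, ← card_union_of_disjoint]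
  · refine (card_le_card fun p hp => ?_).trans (card_adj_fst_level_le r hdeg (t + 1))
    simp only [mem_union, mem_image, mem_filter, mem_univ, true_and] at hp ⊢
    rcases hp with ⟨hadj, hp, -⟩ | ⟨q, ⟨hadj, -, hq⟩, rfl⟩
    · exact ⟨hadj, hp⟩
    · exact ⟨hadj.symm, hq⟩
  · refine Finset.disjoint_left.2 fun p hp hp' => ?_
    simp only [mem_image, mem_filter, mem_univ, true_and] at hp hp'
    obtain ⟨q, ⟨-, hq, -⟩, rfl⟩ := hp'
    rw [Prod.snd_swap] at hp
    omega

theorem levelCard_succ_le (t : ℕ) : G.levelCard r (t + 1) ≤ G.levelEdgeCard r t := by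
  refine card_le_card_of_surjOn Prod.snd fun u hu => ?_
  simp only [coe_filter, mem_univ, true_and, Set.mem_ofPred_eq] at hu
  obtain ⟨a, hadj, ha⟩ := G.exists_adj_dist_eq_of_dist_eq_succ hu
  exact ⟨(a, u), by simp [hadj, ha, hu], rfl⟩

end SimpleGraph

section LevelProfile

variable {R : Type*} [CommRing R]

theorem mul_sub_sq_le [LinearOrder R] [IsStrictOrderedRing R] {a b e x y : R}
    (hbe : b ≤ e) (hea : e ≤ a) (hy : 0 ≤ y) (hyx : y ≤ x) :
    e * (x - y) ^ 2 ≤ (a * x - b * y) * (x - y) := by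
  have hsq : e * (x - y) ^ 2 = (e * x - e * y) * (x - y) := by ring
  rw [hsq]
  refine mul_le_mul_of_nonneg_right ?_ (sub_nonneg.2 hyx)
  nlinarith

variable {d lam : R} {n w : ℕ → R} {m : ℕ}

theorem lam_mul_sum_eq_of_bethe_recurrence
    (h0 : lam * w 0 = d * (w 0 - w 1))
    (hmid : ∀ t < m, lam * w (t + 1) = d * w (t + 1) - w t - (d - 1) * w (t + 2))
    (hlast : lam * w (m + 1) = d * w (m + 1) - w m) :
    lam * ∑ t ∈ range (m + 2), n t * w t ^ 2 =
      ∑ t ∈ range m,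
          ((d - 1) * n (t + 1) * w (t + 1) - n (t + 2) * w (t + 2)) * (w (t + 1) - w (t + 2))
        + (d * n 0 * w 0 - n 1 * w 1) * (w 0 - w 1)
        + (d - 1) * n (m + 1) * w (m + 1) ^ 2 := by
  let g : ℕ → R := fun t => n (t + 1) * w (t + 1) * (w t - w (t + 1))
  have hterm : ∀ t ∈ range m, lam * (n (t + 1) * w (t + 1) ^ 2) =
      ((d - 1) * n (t + 1) * w (t + 1) - n (t + 2) * w (t + 2)) * (w (t + 1) - w (t + 2))
        + (g (t + 1) - g t) := by
    intro t ht
    linear_combination n (t + 1) * w (t + 1) * hmid t (mem_range.1 ht)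
  rw [mul_sum, sum_range_succ, sum_range_succ', sum_congr rfl hterm, sum_add_distrib,
    sum_range_sub g m]
  linear_combination n 0 * w 0 * h0 + n (m + 1) * w (m + 1) * hlast

theorem level_energy_le_of_bethe_recurrence [LinearOrder R] [IsStrictOrderedRing R] {e : ℕ → R}
    (he0 : e 0 ≤ d * n 0)
    (hadd : ∀ t < m, e (t + 1) + e t ≤ d * n (t + 1))
    (hlow : ∀ t ≤ m, n (t + 1) ≤ e t)
    (hw : ∀ t ≤ m + 1, 0 ≤ w t)
    (hanti : ∀ t ≤ m, w (t + 1) ≤ w t)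
    (h0 : lam * w 0 = d * (w 0 - w 1))
    (hmid : ∀ t < m, lam * w (t + 1) = d * w (t + 1) - w t - (d - 1) * w (t + 2))
    (hlast : lam * w (m + 1) = d * w (m + 1) - w m) :
    ∑ t ∈ range (m + 1), e t * (w t - w (t + 1)) ^ 2 + (d * n (m + 1) - e m) * w (m + 1) ^ 2
      ≤ lam * ∑ t ∈ range (m + 2), n t * w t ^ 2 := by
  rw [lam_mul_sum_eq_of_bethe_recurrence h0 hmid hlast, sum_range_succ']
  refine add_le_add (add_le_add (sum_le_sum fun t ht => ?_) ?_) ?_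
  · have ht := mem_range.1 ht
    refine mul_sub_sq_le (hlow (t + 1) ht) ?_ (hw (t + 2) (by omega)) (hanti (t + 1) ht)
    linarith [hadd t ht, hlow t ht.le]
  · exact mul_sub_sq_le (hlow 0 (by omega)) he0 (hw 1 (by omega)) (hanti 0 (by omega))
  · exact mul_le_mul_of_nonneg_right (by linarith [hlow m le_rfl]) (sq_nonneg _)

end LevelProfile

theorem rayleigh_level_bound_general {V : Type*} [Fintype V]
    (G : SimpleGraph V) [DecidableRel G.Adj] (r : V) (d K : ℕ) (hK : 2 ≤ K)
    (hdeg : ∀ u, G.degree u ≤ d)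
    (nLvl : ℕ → ℕ) (eLvl : ℕ → ℕ)
    (hn : ∀ j, nLvl j = (univ.filter fun u => G.dist r u = j).card)
    (he : ∀ j, eLvl j =
      (univ.filter fun p : V × V =>
        G.Adj p.1 p.2 ∧ G.dist r p.1 = j ∧ G.dist r p.2 = j + 1).card)
    (lam : ℝ)
    (v : ℕ → ℝ) (hpos : ∀ j, 1 ≤ j → j ≤ K → 0 < v j)
    (hdec : ∀ j, 1 ≤ j → j < K → v (j + 1) ≤ v j)
    (hrec1 : lam * v 1 = d * (v 1 - v 2))
    (hrec : ∀ j, 2 ≤ j → j ≤ K - 1 →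
      lam * v j = d * v j - v (j - 1) - ((d : ℝ) - 1) * v (j + 1))
    (hrecK : lam * v K = d * v K - v (K - 1)) :
    (∑ j ∈ range (K - 1), (eLvl j : ℝ) * (v (j + 1) - v (j + 2)) ^ 2
        + ((d * nLvl (K - 1) : ℝ) - (eLvl (K - 2) : ℝ)) * v K ^ 2)
      / (∑ j ∈ range K, (nLvl j : ℝ) * v (j + 1) ^ 2) ≤ lam := by
  obtain ⟨m, rfl⟩ : ∃ m, K = m + 2 := ⟨K - 2, by omega⟩
  obtain rfl : nLvl = G.levelCard r := funext hn
  obtain rfl : eLvl = G.levelEdgeCard r := funext he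
  have hden : 0 < ∑ j ∈ range (m + 2), (G.levelCard r j : ℝ) * v (j + 1) ^ 2 := by
    refine sum_pos' (fun j _ => by positivity) ⟨0, by simp, ?_⟩
    have := G.levelCard_zero_pos r
    have := hpos 1 le_rfl (by omega)
    positivity
  rw [div_le_iff₀ hden]
  exact level_energy_le_of_bethe_recurrence (w := fun t => v (t + 1))
    (n := fun t => (G.levelCard r t : ℝ)) (e := fun t => (G.levelEdgeCard r t : ℝ))
    (mod_cast G.levelEdgeCard_le r hdeg 0)
    (fun t _ => mod_cast G.levelEdgeCard_succ_add_le r hdeg t)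
    (fun t _ => mod_cast G.levelCard_succ_le r t)
    (fun t ht => (hpos (t + 1) (by omega) (by omega)).le)
    (fun t ht => hdec (t + 1) (by omega) (by omega))
    hrec1 (fun t ht => by simpa using hrec (t + 2) (by omega) (by omega)) hrecK

/-- Nilli/Friedman-type level-comparison bound: in a finite graph of maximum degree at most
`d` in which every vertex is within distance `K - 1` of a root `r` and all levels are
nonempty, assigning the value `v j` to the vertices at distance `j - 1` from `r`, where `v`
is a positive decreasing solution of the Bethe-tree recurrence with
`lam = d - 2√(d-1)·cos θ`, gives a Rayleigh quotient at most `lam`. -/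
theorem rayleigh_level_bound {V : Type*} [Fintype V] [DecidableEq V]
    (G : SimpleGraph V) [DecidableRel G.Adj] (r : V) (d K : ℕ) (hd : 3 ≤ d) (hK : 2 ≤ K)
    (hdeg : ∀ u, G.degree u ≤ d)
    (hecc : ∀ u, G.Reachable r u ∧ G.dist r u ≤ K - 1)
    (hlevels : ∀ j < K, ∃ u, G.dist r u = j)
    (nLvl : ℕ → ℕ) (eLvl : ℕ → ℕ)
    (hn : ∀ j, nLvl j = (univ.filter fun u => G.dist r u = j).card)
    (he : ∀ j, eLvl j =
      (univ.filter fun p : V × V =>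
        G.Adj p.1 p.2 ∧ G.dist r p.1 = j ∧ G.dist r p.2 = j + 1).card)
    (θ lam : ℝ) (hlam : lam = (d : ℝ) - 2 * Real.sqrt ((d : ℝ) - 1) * Real.cos θ)
    (v : ℕ → ℝ) (hpos : ∀ j, 1 ≤ j → j ≤ K → 0 < v j)
    (hdec : ∀ j, 1 ≤ j → j < K → v (j + 1) ≤ v j)
    (hrec1 : lam * v 1 = d * (v 1 - v 2))
    (hrec : ∀ j, 2 ≤ j → j ≤ K - 1 →
      lam * v j = d * v j - v (j - 1) - ((d : ℝ) - 1) * v (j + 1))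
    (hrecK : lam * v K = d * v K - v (K - 1)) :
    (∑ j ∈ range (K - 1), (eLvl j : ℝ) * (v (j + 1) - v (j + 2)) ^ 2
        + ((d * nLvl (K - 1) : ℝ) - (eLvl (K - 2) : ℝ)) * v K ^ 2)
      / (∑ j ∈ range K, (nLvl j : ℝ) * v (j + 1) ^ 2) ≤ lam :=
  rayleigh_level_bound_general G r d K hK hdeg nLvl eLvl hn he lam v hpos hdec hrec1 hrec hrecK
end
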